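/- arXiv:2510.26706 — 3 statements merged into one kernel-verified Lean document; each statement's English description precedes it below -/
import Mathlib

section
/- For any probability vector s in the simplex of dimension n_e and any vector v in R^{n_e} with coordinates summing to zero, the vector M_s v defined by (M_s v)_i = v_i - s·v satisfies ||M_s v||_∞ ≥ (1/2) ||v||_∞. -/
/-- For any probability vector `s` in the simplex of dimension `n_e` and any
vector `v` with coordinates summing to zero, the vector `M_s v` with
`(M_s v) i = v i - s ⬝ v` satisfies `‖M_s v‖_∞ ≥ (1/2) ‖v‖_∞`. -/
theorem coercivity_on_zero_mean_subspace (n : ℕ) (hn : 1 ≤ n)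
    (s v : Fin n → ℝ)
    (hs0 : ∀ i, 0 ≤ s i) (hs1 : ∑ i, s i = 1)
    (hv : ∑ i, v i = 0) :
    (1 / 2) * (⨆ i, |v i|) ≤ ⨆ i, |v i - ∑ j, s j * v j| := by
  haveI : Nonempty (Fin n) := ⟨⟨0, hn⟩⟩
  set c := ∑ j, s j * v j with hc
  have hbdd1 : BddAbove (Set.range fun i => |v i|) :=
    (Set.finite_range _).bddAbove
  have hbdd2 : BddAbove (Set.range fun i => |v i - c|) :=
    (Set.finite_range _).bddAbove
  obtain ⟨i0, hi0⟩ := Finite.exists_max fun i => |v i|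
  have hM : (⨆ i, |v i|) = |v i0| :=
    le_antisymm (ciSup_le hi0) (le_ciSup hbdd1 i0)
  rw [hM]
  have hT0 : (0:ℝ) ≤ ⨆ i, |v i - c| :=
    le_trans (abs_nonneg _) (le_ciSup hbdd2 i0)
  rcases lt_trichotomy (v i0) 0 with hpos | hzero | hneg
  · -- v i0 < 0, find k with 0 ≤ v k
    have hk : ∃ k, 0 ≤ v k := by
      by_contra h
      push_neg at h
      have : (∑ i, v i) < 0 :=
        Finset.sum_neg (fun i _ => h i) ⟨i0, Finset.mem_univ _⟩
      linarith [hv ▸ this]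
    obtain ⟨k, hk⟩ := hk
    have h1 : |v i0 - c| ≤ ⨆ i, |v i - c| := le_ciSup hbdd2 i0
    have h2 : |v k - c| ≤ ⨆ i, |v i - c| := le_ciSup hbdd2 k
    have h3 : |(v k - c) - (v i0 - c)| ≤ |v k - c| + |v i0 - c| := abs_sub _ _
    have h4 : v k - v i0 ≤ |(v k - c) - (v i0 - c)| := by
      have : (v k - c) - (v i0 - c) = v k - v i0 := by ring
      rw [this]; exact le_abs_self _
    have h5 : |v i0| = -(v i0) := abs_of_neg hpos
    linarith
  · rw [hzero, abs_zero]; linarith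
  · -- v i0 > 0, find k with v k ≤ 0
    have hk : ∃ k, v k ≤ 0 := by
      by_contra h
      push_neg at h
      have : (0:ℝ) < ∑ i, v i :=
        Finset.sum_pos (fun i _ => h i) ⟨i0, Finset.mem_univ _⟩
      linarith [hv ▸ this]
    obtain ⟨k, hk⟩ := hk
    have h1 : |v i0 - c| ≤ ⨆ i, |v i - c| := le_ciSup hbdd2 i0
    have h2 : |v k - c| ≤ ⨆ i, |v i - c| := le_ciSup hbdd2 k
    have h3 : |(v i0 - c) - (v k - c)| ≤ |v i0 - c| + |v k - c| := abs_sub _ _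
    have h4 : v i0 - v k ≤ |(v i0 - c) - (v k - c)| := by
      have : (v i0 - c) - (v k - c) = v i0 - v k := by ring
      rw [this]; exact le_abs_self _
    have h5 : |v i0| = v i0 := abs_of_pos hneg
    linarith
end

section
/- For zero-mean logit vectors r, r' in R^{n_e}, the maximum over classes k of |ℓ_log(r, k) - ℓ_log(r', k)| is at least (1/2) ||r - r'||_∞. -/
/-- The multinomial logistic loss on logit vectors. -/
noncomputable def logLoss {n : ℕ} (r : Fin n → ℝ) (k : Fin n) : ℝ :=
  -r k + Real.log (∑ j, Real.exp (r j))

/-- for zero-mean logit vectors `r, r'`, the maximum over classes of the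
per-class logistic loss variation is at least `(1/2) ‖r - r'‖_∞`. -/
theorem logLoss_max_diff_lower_bound (n : ℕ) (hn : 1 ≤ n) (r r' : Fin n → ℝ)
    (hr : ∑ j, r j = 0) (hr' : ∑ j, r' j = 0) :
    (1 / 2) * (⨆ j, |r j - r' j|) ≤ ⨆ k, |logLoss r k - logLoss r' k| := by
  haveI hne : Nonempty (Fin n) := ⟨⟨0, hn⟩⟩
  set u : Fin n → ℝ := fun j => r j - r' j with hu
  set C : ℝ := Real.log (∑ j, Real.exp (r j)) - Real.log (∑ j, Real.exp (r' j)) with hC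
  have hd : ∀ k, logLoss r k - logLoss r' k = C - u k := by
    intro k; simp only [logLoss, hu, hC]; ring
  have hsum : ∑ j, u j = 0 := by
    simp [hu, Finset.sum_sub_distrib, hr, hr']
  obtain ⟨j0, hj0⟩ := Finite.exists_max (fun j => |u j|)
  have hM : (⨆ j, |r j - r' j|) = |u j0| := by
    apply le_antisymm
    · exact Real.iSup_le (fun i => hj0 i) (abs_nonneg _)
    · exact le_ciSup (f := fun j => |r j - r' j|) (Finite.bddAbove_range _) j0
  set S : ℝ := ⨆ k, |logLoss r k - logLoss r' k| with hS
  have hle : ∀ k, |C - u k| ≤ S := by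
    intro k
    have := le_ciSup (Finite.bddAbove_range fun k => |logLoss r k - logLoss r' k|) k
    rwa [hd k] at this
  rw [hM]
  rcases le_or_gt 0 (u j0) with h0 | h0
  · obtain ⟨k, hk⟩ : ∃ k, u k ≤ 0 := by
      by_contra h
      push_neg at h
      have : 0 < ∑ j, u j :=
        Finset.sum_pos (fun j _ => h j) ⟨⟨0, hn⟩, Finset.mem_univ _⟩
      linarith
    have h1 := hle j0
    have h2 := hle k
    have : |u j0| = u j0 := abs_of_nonneg h0
    nlinarith [le_abs_self (C - u k), neg_abs_le (C - u j0)]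
  · obtain ⟨k, hk⟩ : ∃ k, 0 ≤ u k := by
      by_contra h
      push_neg at h
      have : ∑ j, u j < 0 :=
        Finset.sum_neg (fun j _ => h j) ⟨⟨0, hn⟩, Finset.mem_univ _⟩
      linarith
    have h1 := hle j0
    have h2 := hle k
    have : |u j0| = -u j0 := abs_of_neg h0
    nlinarith [neg_abs_le (C - u k), le_abs_self (C - u j0)]
end

section
/- The conditional variance of the importance-weighted martingale difference Z_t is bounded by ∑_{k=1}^{n_e} E[p_{t,k} | F_{t-1}] / q_min², where q_min = min_k q_{t,k}. -/
/-!
Only the sampled class `k_t` contributes to `Z`, so `q_min (Z + 𝓔(r) - 𝓔(r'))` is a sum of terms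
`w_k` of which at most one is nonzero, and `w_k² ≤ 1_{k_t=k} Q_k` because `|Δℓ_k| ≤ p_k` and
`q_min ≤ q_k`. The conditional variance is invariant under shifts and bounded by the conditional
second moment, hence `q_min² Var[Z | F] ≤ ∑_k E[1_{k_t=k} Q_k | F] = ∑_k q_k E[p_k | F]`, and
`q_k ≤ 1` because the `q_k` are positive and sum to `1`.
-/

open MeasureTheory ProbabilityTheory Filter

lemma Fintype.sq_sum_eq_sum_sq_of_eq_zero {ι R : Type*} [Fintype ι] [CommSemiring R]
    (f : ι → R) (j : ι) (hf : ∀ k ≠ j, f k = 0) : (∑ k, f k) ^ 2 = ∑ k, f k ^ 2 := by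
  rw [Fintype.sum_eq_single j hf, Fintype.sum_eq_single j fun k hk => by simp [hf k hk]]

lemma sq_mul_importance_weighted_le {f q p c d r : ℝ} (hf : f = 0 ∨ f = 1)
    (hc : c = 0 ∨ c = 1) (hd : |d| ≤ p) (hr : 0 ≤ r) (hrq : r ≤ q) :
    (r * (f / (q * p) * (1 - c) * d)) ^ 2 ≤ f := by
  rcases hf with rfl | rfl
  · simp
  have hq : 0 ≤ q := hr.trans hrq
  have hp : 0 ≤ p := (abs_nonneg d).trans hd
  have hc' : |1 - c| ≤ 1 := by rcases hc with rfl | rfl <;> norm_num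
  have hrqp : r / (q * p) * p ≤ 1 := by
    rcases hp.eq_or_lt with rfl | hp
    · simp
    · rw [← div_div, div_mul_cancel₀ _ hp.ne']
      exact div_le_one_of_le₀ hrq hq
  rw [sq_le_one_iff_abs_le_one]
  calc |r * (1 / (q * p) * (1 - c) * d)| = r / (q * p) * (|1 - c| * |d|) := by
        rw [abs_mul, abs_mul, abs_mul, abs_div, abs_mul, abs_of_nonneg hr, abs_of_nonneg hq,
          abs_of_nonneg hp]
        ring
    _ ≤ r / (q * p) * (1 * p) := by gcongr
    _ ≤ 1 := by simpa using hrqp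

section

variable {Ω : Type*} {m₀ m : MeasurableSpace Ω} {μ : Measure[m₀] Ω}

lemma ProbabilityTheory.condVar_add_const (hm : m ≤ m₀) [IsFiniteMeasure μ] {X : Ω → ℝ}
    (hX : Integrable X μ) (c : ℝ) : Var[fun ω => X ω + c; μ | m] =ᵐ[μ] Var[X; μ | m] := by
  refine condExp_congr_ae ?_
  filter_upwards [condExp_add hX (integrable_const c) m] with ω hω
  simp only [Pi.sub_apply, Pi.pow_apply]
  rw [show (fun ω => X ω + c) = X + fun _ => c from rfl, hω, Pi.add_apply, condExp_const hm]
  ring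

lemma ProbabilityTheory.condVar_ae_le_sum_of_sq_le_sum {ι : Type*} [Fintype ι] (hm : m ≤ m₀)
    [IsFiniteMeasure μ] {X : Ω → ℝ} {g h : ι → Ω → ℝ} (hX : MemLp X 2 μ)
    (hg : ∀ k, Integrable (g k) μ) (hXg : ∀ᵐ ω ∂μ, X ω ^ 2 ≤ ∑ k, g k ω)
    (hgh : ∀ k, μ[g k | m] ≤ᵐ[μ] h k) : Var[X; μ | m] ≤ᵐ[μ] ∑ k, h k := calc
  Var[X; μ | m] ≤ᵐ[μ] μ[X ^ 2 | m] := condVar_ae_le_condExp_sq hm hX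
  _ ≤ᵐ[μ] μ[∑ k, g k | m] := by
    refine condExp_mono hX.integrable_sq (integrable_finsetSum' _ fun k _ => hg k) ?_
    simpa only [EventuallyLE, Pi.pow_apply, Finset.sum_apply] using hXg
  _ =ᵐ[μ] ∑ k, μ[g k | m] := condExp_finsetSum (fun k _ => hg k) m
  _ ≤ᵐ[μ] ∑ k, h k := by
    filter_upwards [ae_all_iff.2 hgh] with ω hω
    simpa only [Finset.sum_apply] using Finset.sum_le_sum fun k _ => hω k

lemma MeasureTheory.ae_eq_zero_of_condExp_ae_eq_zero (hm : m ≤ m₀) [SigmaFinite (μ.trim hm)]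
    {f : Ω → ℝ} (hf0 : 0 ≤ᵐ[μ] f) (hf : Integrable f μ) (h : μ[f | m] =ᵐ[μ] 0) :
    f =ᵐ[μ] 0 := by
  refine (integral_eq_zero_iff_of_nonneg_ae hf0 hf).mp ?_
  rw [← integral_condExp hm, integral_congr_ae h, Pi.zero_def, integral_zero]

/-- If `f` is not integrable, then `μ[f | m] = 0` forces `p = 0` a.e., and `g = 0` works. -/
lemma MeasureTheory.exists_integrable_ae_le_of_condExp_ae_eq_const_mul (hm : m ≤ m₀)
    [SigmaFinite (μ.trim hm)] {a f p : Ω → ℝ} {q : ℝ} (hq : 0 < q) (hq1 : q ≤ 1) (hp0 : 0 ≤ p)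
    (hp : Integrable p μ) (haf : a ≤ f) (hap : ∀ ω, p ω = 0 → a ω = 0)
    (hf : μ[f | m] =ᵐ[μ] fun ω => q * μ[p | m] ω) :
    ∃ g, Integrable g μ ∧ a ≤ᵐ[μ] g ∧ μ[g | m] ≤ᵐ[μ] μ[p | m] := by
  have hcond_nonneg : 0 ≤ᵐ[μ] μ[p | m] := condExp_nonneg (.of_forall hp0)
  by_cases hfi : Integrable f μ
  · refine ⟨f, hfi, .of_forall haf, ?_⟩
    filter_upwards [hf, hcond_nonneg] with ω hfω hpω
    exact hfω.trans_le (mul_le_of_le_one_left hpω hq1)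
  refine ⟨0, integrable_zero _ _ _, ?_, by rwa [condExp_zero]⟩
  have hcond : μ[p | m] =ᵐ[μ] 0 := by
    filter_upwards [hf] with ω hω
    rw [condExp_of_not_integrable hfi] at hω
    simpa [hq.ne'] using hω.symm
  filter_upwards [ae_eq_zero_of_condExp_ae_eq_zero hm (.of_forall hp0) hp hcond] with ω hω
  simp [hap ω hω]

end

/-- the conditional variance of the importance-weighted martingale
difference `Z_t` is bounded by `∑_k E[p_{t,k} | F_{t-1}] / q_min²`.  Here `m = F_{t-1}`,
`Z ω = ∑_k (1_{k_t=k} Q_k / (q_k p_k)) (1 - c_k)(ℓ(r,x_t,k) - ℓ(r',x_t,k)) - (𝓔(r) - 𝓔(r'))`,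
the per-class loss variation is bounded by the sampling probability
(`|Δℓ_k| ≤ p_k`, since `r, r'` lie in the version space), costs are binary,
`E[1_{k_t=k} Q_k | F_{t-1}] = q_k E[p_k | F_{t-1}]`, and `q_k ≥ q_min > 0` with
`∑_k q_k = 1`. -/
theorem conditional_variance_bound
    {Ω : Type*} {m0 : MeasurableSpace Ω} (μ : Measure Ω) [IsProbabilityMeasure μ]
    (m : MeasurableSpace Ω) (hm : m ≤ m0)
    (n : ℕ) (kt : Ω → Fin n) (Q : Fin n → Ω → ℝ)
    (hQ01 : ∀ k ω, Q k ω = 0 ∨ Q k ω = 1)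
    (q : Fin n → ℝ) (qmin : ℝ) (hqmin : 0 < qmin) (hq : ∀ k, qmin ≤ q k)
    (hqsum : ∑ k, q k = 1)
    (p : Fin n → Ω → ℝ) (hp0 : ∀ k ω, 0 ≤ p k ω)
    (hpint : ∀ k, Integrable (p k) μ)
    (c lr lr' : Fin n → Ω → ℝ)
    (hc : ∀ k ω, c k ω = 0 ∨ c k ω = 1)
    (hbound : ∀ k ω, |lr k ω - lr' k ω| ≤ p k ω)
    (hmeanA : ∀ k, μ[fun ω => (if kt ω = k then (1 : ℝ) else 0) * Q k ω | m]
        =ᵐ[μ] fun ω => q k * (μ[p k | m]) ω)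
    (Er Er' : ℝ) (Z : Ω → ℝ)
    (hZ : ∀ ω, Z ω = (∑ k, (if kt ω = k then (1 : ℝ) else 0) * Q k ω
        / (q k * p k ω) * (1 - c k ω) * (lr k ω - lr' k ω)) - (Er - Er'))
    (hZint : Integrable Z μ) (hZsqint : Integrable (fun ω => (Z ω) ^ 2) μ) :
    ∀ᵐ ω ∂μ, (μ[fun ω' => (Z ω') ^ 2 | m]) ω - ((μ[Z | m]) ω) ^ 2
      ≤ (∑ k, (μ[p k | m]) ω) / qmin ^ 2 := by
  set w : Fin n → Ω → ℝ := fun k ω => qmin * ((if kt ω = k then (1 : ℝ) else 0) * Q k ω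
    / (q k * p k ω) * (1 - c k ω) * (lr k ω - lr' k ω))
  set Y : Ω → ℝ := qmin • fun ω => Z ω + (Er - Er')
  have hY_sq : ∀ ω, Y ω ^ 2 = ∑ k, w k ω ^ 2 := fun ω => by
    rw [show Y ω = ∑ k, w k ω by simp [Y, w, hZ, Finset.mul_sum]]
    exact Fintype.sq_sum_eq_sum_sq_of_eq_zero _ (kt ω) fun k hk => by simp [w, Ne.symm hk]
  have hq_le_one : ∀ k, q k ≤ 1 := fun k => hqsum ▸
    Finset.single_le_sum (fun j _ => hqmin.le.trans (hq j)) (Finset.mem_univ k)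
  have hw_sq : ∀ k ω, w k ω ^ 2 ≤ (if kt ω = k then (1 : ℝ) else 0) * Q k ω := fun k ω =>
    sq_mul_importance_weighted_le (by split_ifs <;> simp [hQ01]) (hc k ω) (hbound k ω)
      hqmin.le (hq k)
  choose g hg hwg hgp using fun k =>
    exists_integrable_ae_le_of_condExp_ae_eq_const_mul (a := fun ω => w k ω ^ 2) hm
      (hqmin.trans_le (hq k)) (hq_le_one k) (hp0 k) (hpint k) (hw_sq k)
      (fun ω hpω => by simp [w, hpω]) (hmeanA k)
  have hZ_L2 : MemLp Z 2 μ := (memLp_two_iff_integrable_sq hZint.aestronglyMeasurable).2 hZsqint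
  have hY_L2 : MemLp Y 2 μ := (hZ_L2.add (memLp_const (Er - Er'))).const_smul qmin
  have hY_var : Var[Y; μ | m] =ᵐ[μ] qmin ^ 2 • Var[Z; μ | m] :=
    (condVar_smul _ _).trans ((condVar_add_const hm hZint _).const_smul _)
  have hY_bound : Var[Y; μ | m] ≤ᵐ[μ] ∑ k, μ[p k | m] :=
    condVar_ae_le_sum_of_sq_le_sum hm hY_L2 hg
      (by filter_upwards [ae_all_iff.2 hwg] with ω hω
          simpa only [hY_sq] using Finset.sum_le_sum fun k _ => hω k) hgp
  filter_upwards [condVar_ae_eq_condExp_sq_sub_sq_condExp hm hZ_L2, hY_var, hY_bound]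
    with ω hZω hYω hboundω
  rw [hYω, Pi.smul_apply, hZω, smul_eq_mul, Finset.sum_apply] at hboundω
  rw [le_div_iff₀ (by positivity), mul_comm]
  exact hboundω
end
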